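/- A nonzero finitely generated fractional ideal I of an integral domain D is a quasi-cancellation ideal if and only if it is a cancellation ideal. -/

import Mathlib

open FractionalIdeal Submodule

theorem quasiCancellation_iff_cancellation (D : Type*) [CommRing D] [IsDomain D]
    (I : FractionalIdeal (nonZeroDivisors D) (FractionRing D))
    (hI : I ≠ 0) (hfg : (I : Submodule D (FractionRing D)).FG) :
    (∀ F : FractionalIdeal (nonZeroDivisors D) (FractionRing D),
        F ≠ 0 → (F : Submodule D (FractionRing D)).FG → (I * F) / I = F) ↔
    (∀ J : FractionalIdeal (nonZeroDivisors D) (FractionRing D),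
        J ≠ 0 → (I * J) / I = J) := by
  constructor
  · intro h J hJ
    apply le_antisymm
    · intro x hx
      have hx' : x ∈ I * J / I := hx
      rw [FractionalIdeal.mem_div_iff_of_ne_zero hI] at hx'
      replace hx := hx'
      by_cases hx0 : x = 0
      · subst hx0; exact J.zero_mem
      -- submodule-level argument
      have hNle : Submodule.span D {x} * (I : Submodule D (FractionRing D)) ≤
          ((I * J : FractionalIdeal (nonZeroDivisors D) (FractionRing D)) :
            Submodule D (FractionRing D)) := by
        rw [Submodule.mul_le]
        intro m hm n hn
        rw [Submodule.mem_span_singleton] at hm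
        obtain ⟨c, rfl⟩ := hm
        rw [smul_mul_assoc]
        exact Submodule.smul_mem _ c (hx n hn)
      have hJJ : (J : Submodule D (FractionRing D)) =
          ⨆ v : (J : Submodule D (FractionRing D)),
            Submodule.span D {(v : FractionRing D)} := by
        apply le_antisymm
        · intro y hy
          exact le_iSup (fun v : (J : Submodule D (FractionRing D)) =>
            Submodule.span D {(v : FractionRing D)}) ⟨y, hy⟩
            (Submodule.mem_span_singleton_self y)
        · rw [iSup_le_iff]
          rintro ⟨y, hy⟩
          rw [Submodule.span_le, Set.singleton_subset_iff]
          exact hy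
      have hcomp : IsCompactElement
          (Submodule.span D {x} * (I : Submodule D (FractionRing D))) :=
        (Submodule.fg_iff_compact _).1 ((Submodule.fg_span_singleton x).mul hfg)
      have hle2 : Submodule.span D {x} * (I : Submodule D (FractionRing D)) ≤
          ⨆ v : (J : Submodule D (FractionRing D)),
            (I : Submodule D (FractionRing D)) * Submodule.span D {(v : FractionRing D)} := by
        refine hNle.trans ?_
        conv_lhs => rw [FractionalIdeal.coe_mul, hJJ, Submodule.mul_iSup]
      obtain ⟨s, hs⟩ := CompleteLattice.IsCompactElement.exists_finset_of_le_iSup _ hcomp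
        (fun v : (J : Submodule D (FractionRing D)) =>
          (I : Submodule D (FractionRing D)) * Submodule.span D {(v : FractionRing D)}) hle2
      set P : Submodule D (FractionRing D) :=
        ⨆ v ∈ s, Submodule.span D {(v : FractionRing D)} with hP
      have hPle : P ≤ (J : Submodule D (FractionRing D)) := by
        rw [hP, iSup_le_iff]
        rintro ⟨y, hy⟩
        rw [iSup_le_iff]
        intro _
        rw [Submodule.span_le, Set.singleton_subset_iff]
        exact hy
      have hPfg : P.FG := by
        classical
        rw [hP, ← Finset.sup_eq_iSup]
        exact Submodule.fg_finset_sup s _ (fun v _ => Submodule.fg_span_singleton _)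
      have hsP : Submodule.span D {x} * (I : Submodule D (FractionRing D)) ≤
          (I : Submodule D (FractionRing D)) * P := by
        refine hs.trans ?_
        rw [hP, Submodule.mul_iSup]
        apply iSup_mono
        intro v
        rw [Submodule.mul_iSup]
      set F0 : FractionalIdeal (nonZeroDivisors D) (FractionRing D) :=
        ⟨P, FractionalIdeal.isFractional_of_le hPle⟩ with hF0
      have hF0coe : (F0 : Submodule D (FractionRing D)) = P := rfl
      set F : FractionalIdeal (nonZeroDivisors D) (FractionRing D) :=
        FractionalIdeal.spanSingleton (nonZeroDivisors D) x + F0 with hF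
      have hIF : I * F = I * F0 := by
        apply le_antisymm
        · rw [hF, mul_add]
          rw [← FractionalIdeal.sup_eq_add]
          apply sup_le _ le_rfl
          rw [← FractionalIdeal.coe_le_coe, FractionalIdeal.coe_mul,
            FractionalIdeal.coe_mul, FractionalIdeal.coe_spanSingleton, hF0coe]
          refine le_trans ?_ hsP
          rw [mul_comm]
        · refine mul_le_mul_right ?_ I
          rw [hF, ← FractionalIdeal.sup_eq_add]
          exact le_sup_right
      have hxF : x ∈ F := by
        rw [hF]
        rw [← FractionalIdeal.sup_eq_add]
        exact (le_sup_left :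
          FractionalIdeal.spanSingleton (nonZeroDivisors D) x ≤ _)
          (FractionalIdeal.mem_spanSingleton_self _ x)
      have hFne : F ≠ 0 := by
        intro h0
        rw [h0] at hxF
        exact hx0 ((FractionalIdeal.mem_zero_iff _).1 hxF)
      have hFfg : (F : Submodule D (FractionRing D)).FG := by
        rw [hF, FractionalIdeal.coe_add, FractionalIdeal.coe_spanSingleton, hF0coe,
          Submodule.add_eq_sup]
        exact (Submodule.fg_span_singleton _).sup hPfg
      have hF0ne : F0 ≠ 0 := by
        obtain ⟨a, haI, ha0⟩ : ∃ a ∈ I, a ≠ (0 : FractionRing D) := by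
          by_contra hc
          push_neg at hc
          exact hI (FractionalIdeal.eq_zero_iff.2 hc)
        intro h0
        have : x * a ∈ (I : Submodule D (FractionRing D)) * P :=
          hsP (Submodule.mul_mem_mul (Submodule.mem_span_singleton_self x) haI)
        rw [← hF0coe, ← FractionalIdeal.coe_mul, h0, mul_zero] at this
        rw [FractionalIdeal.mem_coe, FractionalIdeal.mem_zero_iff] at this
        exact mul_ne_zero hx0 ha0 this
      have hFF0 : F = F0 := by
        rw [← h F hFne hFfg, hIF, h F0 hF0ne hPfg]
      rw [hFF0] at hxF
      show x ∈ (J : Submodule D (FractionRing D))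
      exact hPle hxF
    · rw [FractionalIdeal.le_div_iff_of_ne_zero hI]
      intro x hxJ y hyI
      rw [mul_comm x y]
      exact FractionalIdeal.mul_mem_mul hyI hxJ
  · intro h F hF _
    exact h F hF
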